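/- arXiv:2505.12352 — 7 statements merged into one kernel-verified Lean document; each statement's English description precedes it below -/
import Mathlib

section
/- For the three-dimensional Brauer vaccination model, let S⁰ = (μ+θ)Λ/(μ(μ+φ+θ)) and V⁰ = φΛ/(μ(μ+θ+φ)). Then (S⁰, 0, V⁰) is a steady state (the disease-free equilibrium), and all eigenvalues (complex roots of the characteristic polynomial) of the Jacobian matrix J = [[−(μ+φ), −βS⁰+γ, θ], [0, βS⁰+σβV⁰−(μ+γ), 0], [φ, −σβV⁰, −(μ+θ)]] of the system at this point have negative real parts if and only if βΛ(μ+θ+σφ) < μ(μ+γ)(μ+θ+φ). -/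
/-!
At the disease-free equilibrium the infected row of the Jacobian is `(0, d, 0)`, so the
characteristic polynomial splits as `(z - d)` times the characteristic polynomial of the
`(S, V)` block, `z² + (2μ + φ + θ) z + μ(μ + φ + θ)`. By Routh–Hurwitz the quadratic factor
is stable, so stability is decided by the sign of `d = βS⁰ + σβV⁰ - (μ + γ)`, and clearing the
denominator `μ(μ + θ + φ)` turns `d < 0` into the threshold condition.
-/

open Polynomial Matrix

lemma Matrix.eval_charpoly_fin_three_of_row_one {R : Type*} [CommRing R]
    (M : Matrix (Fin 3) (Fin 3) R) (h10 : M 1 0 = 0) (h12 : M 1 2 = 0) (t : R) :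
    M.charpoly.eval t =
      (t - M 1 1) * (t ^ 2 - (M 0 0 + M 2 2) * t + (M 0 0 * M 2 2 - M 0 2 * M 2 0)) := by
  rw [eval_charpoly, det_fin_three]
  simp [h10, h12]
  ring

lemma Complex.re_neg_of_quadratic_eq_zero {b c : ℝ} (hb : 0 < b) (hc : 0 < c) {z : ℂ}
    (hz : z ^ 2 + b * z + c = 0) : z.re < 0 := by
  have him : z.im * (2 * z.re + b) = 0 := by
    have := congrArg Complex.im hz
    simp only [pow_two, add_im, mul_im, ofReal_re, ofReal_im, zero_im] at this
    linear_combination this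
  have hre : z.re ^ 2 - z.im ^ 2 + b * z.re + c = 0 := by
    have := congrArg Complex.re hz
    simp only [pow_two, add_re, mul_re, ofReal_re, ofReal_im, zero_re] at this
    linear_combination this
  by_contra! h
  rcases mul_eq_zero.mp him with hy | hx
  · nlinarith
  · linarith

lemma Complex.forall_root_re_neg_iff {b c : ℝ} (hb : 0 < b) (hc : 0 < c) (d : ℝ) :
    (∀ z : ℂ, (z - d) * (z ^ 2 + b * z + c) = 0 → z.re < 0) ↔ d < 0 := by
  constructor
  · intro h
    simpa using h d (by simp)
  · intro hd z hz
    rcases mul_eq_zero.mp hz with hlin | hquad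
    · rw [sub_eq_zero.mp hlin, ofReal_re]
      exact hd
    · exact re_neg_of_quadratic_eq_zero hb hc hquad

theorem stmt3_general (Λ β μ φ γ θ σ : ℝ) (hμ : 0 < μ)
    (hφ : 0 < φ) (hθ : 0 < θ)
    (S0 V0 : ℝ) (hS0 : S0 = (μ + θ) * Λ / (μ * (μ + φ + θ)))
    (hV0 : V0 = φ * Λ / (μ * (μ + θ + φ))) :
    (Λ - β * S0 * 0 - (μ + φ) * S0 + γ * 0 + θ * V0 = 0 ∧
      β * S0 * 0 + σ * β * V0 * 0 - (μ + γ) * 0 = 0 ∧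
      φ * S0 - σ * β * V0 * 0 - (μ + θ) * V0 = 0) ∧
    ((∀ z : ℂ,
        ((!![-(μ + φ), -β * S0 + γ, θ;
             0, β * S0 + σ * β * V0 - (μ + γ), 0;
             φ, -σ * β * V0, -(μ + θ)]).map (fun x : ℝ => (x : ℂ))).charpoly.IsRoot z →
        z.re < 0) ↔
      β * Λ * (μ + θ + σ * φ) < μ * (μ + γ) * (μ + θ + φ)) := by
  have hN : 0 < μ * (μ + θ + φ) := by positivity
  have htrace : 0 < 2 * μ + φ + θ := by positivity
  rw [add_right_comm μ φ θ] at hS0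
  refine ⟨⟨?_, by ring, ?_⟩, ?_⟩
  · rw [hS0, hV0]; field_simp; ring
  · rw [hS0, hV0]; field_simp; ring
  set d := β * S0 + σ * β * V0 - (μ + γ) with hd
  have hd_mul : d * (μ * (μ + θ + φ)) =
      β * Λ * (μ + θ + σ * φ) - μ * (μ + γ) * (μ + θ + φ) := by
    rw [hd, hS0, hV0]; field_simp
  have hfactor : ∀ z : ℂ, ((!![-(μ + φ), -β * S0 + γ, θ; 0, d, 0; φ, -σ * β * V0, -(μ + θ)]).map
      (fun x : ℝ => (x : ℂ))).charpoly.eval z =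
        (z - d) * (z ^ 2 + ((2 * μ + φ + θ : ℝ) : ℂ) * z + ((μ * (μ + θ + φ) : ℝ) : ℂ)) := by
    intro z
    rw [eval_charpoly_fin_three_of_row_one _ (by simp) (by simp)]
    simp only [map_apply, of_apply, cons_val', cons_val_zero, cons_val_one, cons_val_two,
      empty_val', cons_val_fin_one, tail_cons, vecHead]
    push_cast
    ring
  simp_rw [IsRoot, hfactor, Complex.forall_root_re_neg_iff htrace hN]
  rw [← sub_neg (a := β * Λ * _), ← hd_mul]
  exact ⟨fun h => mul_neg_of_neg_of_pos h hN, fun h => neg_of_mul_neg_left h hN.le⟩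

/-- For the three-dimensional Brauer vaccination model
`S' = Λ − βSI − (μ+φ)S + γI + θV`, `I' = βSI + σβVI − (μ+γ)I`,
`V' = φS − σβVI − (μ+θ)V`, the point `(S⁰, 0, V⁰)` with
`S⁰ = (μ+θ)Λ/(μ(μ+φ+θ))`, `V⁰ = φΛ/(μ(μ+θ+φ))` is a steady state (the DFE),
and all complex roots of the characteristic polynomial of the Jacobian there
have negative real parts iff `βΛ(μ+θ+σφ) < μ(μ+γ)(μ+θ+φ)`. -/
theorem stmt3 (Λ β μ φ γ θ σ : ℝ) (hΛ : 0 < Λ) (hβ : 0 < β) (hμ : 0 < μ)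
    (hφ : 0 < φ) (hγ : 0 < γ) (hθ : 0 < θ) (hσ0 : 0 ≤ σ) (hσ1 : σ ≤ 1)
    (S0 V0 : ℝ) (hS0 : S0 = (μ + θ) * Λ / (μ * (μ + φ + θ)))
    (hV0 : V0 = φ * Λ / (μ * (μ + θ + φ))) :
    (Λ - β * S0 * 0 - (μ + φ) * S0 + γ * 0 + θ * V0 = 0 ∧
      β * S0 * 0 + σ * β * V0 * 0 - (μ + γ) * 0 = 0 ∧
      φ * S0 - σ * β * V0 * 0 - (μ + θ) * V0 = 0) ∧
    ((∀ z : ℂ,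
        ((!![-(μ + φ), -β * S0 + γ, θ;
             0, β * S0 + σ * β * V0 - (μ + γ), 0;
             φ, -σ * β * V0, -(μ + θ)]).map (fun x : ℝ => (x : ℂ))).charpoly.IsRoot z →
        z.re < 0) ↔
      β * Λ * (μ + θ + σ * φ) < μ * (μ + γ) * (μ + θ + φ)) :=
  stmt3_general Λ β μ φ γ θ σ hμ hφ hθ S0 V0 hS0 hV0
end

section
/- Let β, K, μ, γ, φ, θ > 0 and 0 ≤ σ < 1, and define a₁ = σβ(μ+γ) + β(μ+θ+σφ) − σβ²K and a₀ = (μ+θ+φ)(μ+γ) − β(μ+θ+σφ)K. If a₀ = 0, then a₁ < 0 holds if and only if σ²φ² + σφ(−γ + μ + 2θ + σ(γ+μ)) + (μ+θ)² < 0. That is, under the condition that the basic reproductive ratio equals one (a₀ = 0), the criterion a₁ < 0 for a backward bifurcation obtained from the quadratic equation for steady states is equivalent to the criterion obtained from the centre manifold method. -/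
/-- For the Brauer vaccination model with `0 ≤ σ < 1`, if
`a₀ = (μ+θ+φ)(μ+γ) − β(μ+θ+σφ)K = 0` (basic reproductive ratio equal to one),
then the backward bifurcation criterion `a₁ < 0`, with
`a₁ = σβ(μ+γ) + β(μ+θ+σφ) − σβ²K`, holds iff
`σ²φ² + σφ(−γ + μ + 2θ + σ(γ+μ)) + (μ+θ)² < 0`. -/
theorem stmt5 (β K μ γ φ θ σ : ℝ) (hβ : 0 < β) (hK : 0 < K) (hμ : 0 < μ)
    (hγ : 0 < γ) (hφ : 0 < φ) (hθ : 0 < θ) (hσ0 : 0 ≤ σ) (hσ1 : σ < 1)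
    (a₁ a₀ : ℝ)
    (ha₁ : a₁ = σ * β * (μ + γ) + β * (μ + θ + σ * φ) - σ * β ^ 2 * K)
    (ha₀ : a₀ = (μ + θ + φ) * (μ + γ) - β * (μ + θ + σ * φ) * K)
    (h0 : a₀ = 0) :
    a₁ < 0 ↔
      σ ^ 2 * φ ^ 2 + σ * φ * (-γ + μ + 2 * θ + σ * (γ + μ)) + (μ + θ) ^ 2 < 0 := by
  have hD : 0 < μ + θ + σ * φ := by positivity
  have h : β * (μ + θ + σ * φ) * K = (μ + θ + φ) * (μ + γ) := by
    rw [ha₀] at h0; linarith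
  have hkey : a₁ * (μ + θ + σ * φ) =
      β * (σ ^ 2 * φ ^ 2 + σ * φ * (-γ + μ + 2 * θ + σ * (γ + μ)) + (μ + θ) ^ 2) := by
    rw [ha₁]; linear_combination (-σ * β) * h
  constructor
  · intro ha
    have h1 : a₁ * (μ + θ + σ * φ) < 0 := mul_neg_of_neg_of_pos ha hD
    rw [hkey] at h1
    nlinarith [h1]
  · intro he
    have h1 : β * (σ ^ 2 * φ ^ 2 + σ * φ * (-γ + μ + 2 * θ + σ * (γ + μ)) + (μ + θ) ^ 2) < 0 :=
      mul_neg_of_pos_of_neg hβ he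
    rw [← hkey] at h1
    nlinarith [h1]
end

section
/- Let Λ, β, μ, φ, γ, θ > 0 and 0 < σ < 1, let S, V > 0 satisfy β(S + σV) = μ + γ (bifurcation point condition), and let A be the 3×3 matrix [[−(μ+φ), −βS+γ, θ], [0, 0, 0], [φ, −σβV, −(μ+θ)]] (the linearization of the three-dimensional Brauer model at the disease-free equilibrium at the bifurcation point). Set B = 2βσ/((1−σ)(φ+μ+θ)) and C = −2βσ/((1−σ)(φ+μ+θ)). Then A applied to the column vector (B, 0, C) equals the vector (2β/(1−σ))·(−σ, 0, σ). Consequently the coefficient c = −βB − σβC = −β(1−σ)B = −2β²σ/(φ+μ+θ) is negative for all such parameter values. -/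
/-- In the three-dimensional Brauer vaccination model, at a
bifurcation point (`β(S + σV) = μ + γ`) the linearization
`A = [[−(μ+φ), −βS+γ, θ], [0, 0, 0], [φ, −σβV, −(μ+θ)]]` maps the vector
`(B, 0, C)` with `B = 2βσ/((1−σ)(φ+μ+θ))`, `C = −B` to
`(2β/(1−σ))·(−σ, 0, σ)`; consequently the centre manifold coefficient
`c = −βB − σβC = −β(1−σ)B = −2β²σ/(φ+μ+θ)` is negative. -/
theorem stmt7 (Λ β μ φ γ θ σ S V : ℝ) (hΛ : 0 < Λ) (hβ : 0 < β) (hμ : 0 < μ)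
    (hφ : 0 < φ) (hγ : 0 < γ) (hθ : 0 < θ) (hσ0 : 0 < σ) (hσ1 : σ < 1)
    (hS : 0 < S) (hV : 0 < V)
    (hbif : β * (S + σ * V) = μ + γ)
    (B C : ℝ)
    (hB : B = 2 * β * σ / ((1 - σ) * (φ + μ + θ)))
    (hC : C = -(2 * β * σ) / ((1 - σ) * (φ + μ + θ))) :
    (!![-(μ + φ), -β * S + γ, θ;
        0, 0, 0;
        φ, -σ * β * V, -(μ + θ)]).mulVec ![B, 0, C] =
      (2 * β / (1 - σ)) • ![-σ, 0, σ] ∧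
    -β * B - σ * β * C = -β * (1 - σ) * B ∧
    -β * B - σ * β * C = -(2 * β ^ 2 * σ) / (φ + μ + θ) ∧
    -β * B - σ * β * C < 0 := by

  have h1 : (1 - σ) ≠ 0 := by nlinarith
  have h2 : (φ + μ + θ) ≠ 0 := by positivity
  refine ⟨?_, ?_, ?_, ?_⟩
  · funext i
    fin_cases i <;>
      simp [Matrix.mulVec, dotProduct, Fin.sum_univ_three, hB, hC] <;>
      field_simp <;> ring
  · rw [hB, hC]; field_simp; ring
  · rw [hB, hC]; field_simp; ring
  · rw [hB, hC]
    have : -β * (2 * β * σ / ((1 - σ) * (φ + μ + θ))) -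
        σ * β * (-(2 * β * σ) / ((1 - σ) * (φ + μ + θ))) =
        -(2 * β ^ 2 * σ) / (φ + μ + θ) := by field_simp; ring
    rw [this]
    have : 0 < 2 * β ^ 2 * σ / (φ + μ + θ) := by positivity
    linarith [neg_div (φ + μ + θ) (2 * β ^ 2 * σ)]
end

section
/- Define, for positive real parameters Λ, μ, σ, ψ, δ, γ, η, w, D with 0 < σ < 1, the expression E = −Λ(μ+σψ)/(Dμ(μ+ψ)) − (δ(μ+γ)/(η(μ+σψ)))·(ψσ²/μ) + (δ/(η(μ+ψ)))·(−μ − γ + (w/(μ+w))·γ(μ+σψ)/μ). Then there exists a choice of such positive parameters for which E < 0, and there exists a choice of such positive parameters for which E > 0. -/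
/-- The expression
`E = −Λ(μ+σψ)/(Dμ(μ+ψ)) − (δ(μ+γ)/(η(μ+σψ)))·(ψσ²/μ)
     + (δ/(η(μ+ψ)))·(−μ − γ + (w/(μ+w))·γ(μ+σψ)/μ)`
can be made negative for some choice of positive parameters with `0 < σ < 1`,
and positive for some other choice. -/
theorem stmt10 :
    (∃ Λ μ σ ψ δ γ η w D : ℝ,
      0 < Λ ∧ 0 < μ ∧ 0 < σ ∧ σ < 1 ∧ 0 < ψ ∧ 0 < δ ∧ 0 < γ ∧ 0 < η ∧
      0 < w ∧ 0 < D ∧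
      -(Λ * (μ + σ * ψ)) / (D * μ * (μ + ψ)) -
          δ * (μ + γ) / (η * (μ + σ * ψ)) * (ψ * σ ^ 2 / μ) +
          δ / (η * (μ + ψ)) *
            (-μ - γ + w / (μ + w) * (γ * (μ + σ * ψ) / μ)) < 0) ∧
    (∃ Λ μ σ ψ δ γ η w D : ℝ,
      0 < Λ ∧ 0 < μ ∧ 0 < σ ∧ σ < 1 ∧ 0 < ψ ∧ 0 < δ ∧ 0 < γ ∧ 0 < η ∧
      0 < w ∧ 0 < D ∧
      0 < -(Λ * (μ + σ * ψ)) / (D * μ * (μ + ψ)) -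
          δ * (μ + γ) / (η * (μ + σ * ψ)) * (ψ * σ ^ 2 / μ) +
          δ / (η * (μ + ψ)) *
            (-μ - γ + w / (μ + w) * (γ * (μ + σ * ψ) / μ))) := by
  constructor
  · exact ⟨1, 1, 1/2, 1, 1, 1, 1, 1, 1, by norm_num⟩
  · exact ⟨1/1000, 1, 1/2, 1, 1, 1000, 1, 1000, 1000, by norm_num⟩
end

section
/- Define, for positive parameters s, r_T, d, T_max, r_I, b, ρ, R*, c with p₀ ≤ T_max, the quantities a₁₁ = sqrt((r_T−d)² + 4sr_T/T_max), p₀ = (r_T − d + a₁₁)·T_max/(2r_T), a₁₂ = p₀·r_T/T_max, and the bifurcation coefficient a = a₁₁(b+c)·[(b+c)·((b+c)(a₁₂ − a₁₁) + bρR*)·r_I/T_max − bρR*·c·a₁₁/p₀], evaluated with δ chosen as δ = bρR*/(b+c) + r_I(1 − p₀/T_max) so that the basic reproductive ratio equals one. Then there exists a choice of such positive parameters for which a > 0 (so the model exhibits a backward bifurcation), and there exists a choice of such positive parameters for which a < 0 (so the model exhibits a forward bifurcation). -/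
/-- For the in-host hepatitis C model with `p₀ ≤ T_max` and `δ`
chosen so that `R₀ = 1`, the bifurcation coefficient
`a = a₁₁(b+c)·[(b+c)·((b+c)(a₁₂ − a₁₁) + bρR*)·r_I/T_max − bρR*·c·a₁₁/p₀]`
can be made positive (backward bifurcation) for some choice of positive
parameters, and negative (forward bifurcation) for some other choice. -/
theorem stmt15 :
    (∃ s rT d Tmax rI b ρ Rstar c δ a₁₁ p₀ a₁₂ : ℝ,
      0 < s ∧ 0 < rT ∧ 0 < d ∧ 0 < Tmax ∧ 0 < rI ∧ 0 < b ∧ 0 < ρ ∧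
      0 < Rstar ∧ 0 < c ∧
      a₁₁ = Real.sqrt ((rT - d) ^ 2 + 4 * s * rT / Tmax) ∧
      p₀ = (rT - d + a₁₁) * Tmax / (2 * rT) ∧
      a₁₂ = p₀ * rT / Tmax ∧
      p₀ ≤ Tmax ∧
      δ = b * ρ * Rstar / (b + c) + rI * (1 - p₀ / Tmax) ∧
      0 < a₁₁ * (b + c) *
        ((b + c) * ((b + c) * (a₁₂ - a₁₁) + b * ρ * Rstar) * rI / Tmax -
          b * ρ * Rstar * c * a₁₁ / p₀)) ∧
    (∃ s rT d Tmax rI b ρ Rstar c δ a₁₁ p₀ a₁₂ : ℝ,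
      0 < s ∧ 0 < rT ∧ 0 < d ∧ 0 < Tmax ∧ 0 < rI ∧ 0 < b ∧ 0 < ρ ∧
      0 < Rstar ∧ 0 < c ∧
      a₁₁ = Real.sqrt ((rT - d) ^ 2 + 4 * s * rT / Tmax) ∧
      p₀ = (rT - d + a₁₁) * Tmax / (2 * rT) ∧
      a₁₂ = p₀ * rT / Tmax ∧
      p₀ ≤ Tmax ∧
      δ = b * ρ * Rstar / (b + c) + rI * (1 - p₀ / Tmax) ∧
      a₁₁ * (b + c) *
        ((b + c) * ((b + c) * (a₁₂ - a₁₁) + b * ρ * Rstar) * rI / Tmax -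
          b * ρ * Rstar * c * a₁₁ / p₀) < 0) := by
  constructor
  · exact ⟨1, 1, 1, 4, 4, 1, 2, 1, 1, 3, 1, 2, 1/2, by norm_num, by norm_num,
      by norm_num, by norm_num, by norm_num, by norm_num, by norm_num,
      by norm_num, by norm_num,
      by rw [show ((1:ℝ)-1)^2 + 4*1*1/4 = 1 by norm_num, Real.sqrt_one],
      by norm_num, by norm_num, by norm_num, by norm_num, by norm_num⟩
  · exact ⟨1, 1, 1, 4, 1, 1, 1, 1, 1, 1, 1, 2, 1/2, by norm_num, by norm_num,
      by norm_num, by norm_num, by norm_num, by norm_num, by norm_num,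
      by norm_num, by norm_num,
      by rw [show ((1:ℝ)-1)^2 + 4*1*1/4 = 1 by norm_num, Real.sqrt_one],
      by norm_num, by norm_num, by norm_num, by norm_num, by norm_num⟩
end

section
/- There exist positive parameter values s, r_T, T_max, d, r_I, b, δ, ρ, R*, c for the in-host hepatitis C model such that: (i) δ > r_I(1 − p₀/T_max) and the basic reproductive ratio R₀ = bρR*/((b+c)(δ − r_I(1 − p₀/T_max))) satisfies R₀ < 1, where p₀ = (r_T − d + sqrt((r_T−d)² + 4sr_T/T_max))·T_max/(2r_T); (ii) there exist exactly two points (T, I, V) with T > 0, I > 0, V > 0 at which all three right-hand sides of the system vanish; and (iii) at one of these two points all eigenvalues (complex roots of the characteristic polynomial) of the 3×3 Jacobian matrix of the right-hand side have negative real parts, while at the other point the Jacobian has an eigenvalue with positive real part. -/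
/-!
Take `s = 8, r_T = 5, T_max = 1, d = 2, r_I = 25, b = 12, δ = 30, ρ = 35, R* = 1, c = 3`.
Then `p₀ = 8/5` and `R₀ = 28/45 < 1`, yet the model has a backward bifurcation: eliminating the
incidence term, a positive steady state is determined by its total `N = T + I`, which solves
`(5N - 4)(5N - 3)(3N + 2) = 0`. This gives the two steady states `(1/5, 2/5, 2)` and
`(1/2, 3/10, 1)`. The Jacobian at the first satisfies the Routh–Hurwitz conditions; at the second
it has positive determinant, so its (odd degree) characteristic polynomial has a positive root.
-/

open Polynomial

/-- The right-hand side of the in-host hepatitis C model, in the variables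
`x = (T, I, V)`. -/
noncomputable def hcvRHS (s rT Tmax d rI b δ ρ Rstar c : ℝ)
    (x : Fin 3 → ℝ) : Fin 3 → ℝ :=
  ![s + rT * x 0 * (1 - (x 0 + x 1) / Tmax) - d * x 0 -
      b * x 0 * x 2 / (x 0 + x 1),
    rI * x 1 * (1 - (x 0 + x 1) / Tmax) + b * x 0 * x 2 / (x 0 + x 1) -
      δ * x 1,
    ρ * Rstar * x 1 - c * x 2 - b * x 0 * x 2 / (x 0 + x 1)]

/-- The Jacobian matrix of a map `f : ℝⁿ → ℝⁿ` at a point `p`, whose `(i,j)`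
entry is the partial derivative `∂fᵢ/∂xⱼ` at `p`. -/
noncomputable def jacobianAt {n : ℕ} (f : (Fin n → ℝ) → Fin n → ℝ)
    (p : Fin n → ℝ) : Matrix (Fin n) (Fin n) ℝ :=
  fun i j => deriv (fun t => f (Function.update p j t) i) (p j)

theorem Complex.re_neg_of_cubic_eq_zero {a b c : ℝ} (ha : 0 < a) (hc : 0 < c) (habc : c < a * b)
    {z : ℂ} (hz : z ^ 3 + a * z ^ 2 + b * z + c = 0) : z.re < 0 := by
  have hb : 0 < b := pos_of_mul_pos_right (hc.trans habc) ha.le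
  obtain ⟨x, y⟩ := z
  have hre := congrArg Complex.re hz
  have him := congrArg Complex.im hz
  simp only [pow_succ, pow_zero, one_mul, add_re, add_im, mul_re, mul_im, ofReal_re, ofReal_im,
    zero_re, zero_im] at hre him
  by_contra! hx
  have him' : y * (3 * x ^ 2 - y ^ 2 + 2 * a * x + b) = 0 := by linear_combination him
  rcases mul_eq_zero.mp him' with rfl | hy
  · nlinarith [mul_nonneg hx hx, mul_nonneg (mul_nonneg hx hx) hx]
  · -- substituting `y² = 3x² + 2ax + b` into the real part leaves `c - ab - (nonnegative)`
    nlinarith [mul_nonneg hx hx, mul_nonneg (mul_nonneg hx hx) hx, mul_nonneg hx hb.le,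
      mul_nonneg hx (sq_nonneg a)]

namespace Matrix

variable {R : Type*} [CommRing R] {n : Type*} [Fintype n] [DecidableEq n]

def principalMinorSum₂ (A : Matrix (Fin 3) (Fin 3) R) : R :=
  A 0 0 * A 1 1 - A 0 1 * A 1 0 + A 0 0 * A 2 2 - A 0 2 * A 2 0 +
    A 1 1 * A 2 2 - A 1 2 * A 2 1

theorem charpoly_fin_three (A : Matrix (Fin 3) (Fin 3) R) :
    A.charpoly = X ^ 3 - C A.trace * X ^ 2 + C A.principalMinorSum₂ * X - C A.det := by
  simp only [charpoly, det_fin_three, trace_fin_three, principalMinorSum₂, charmatrix_apply,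
    diagonal_apply, ↓reduceIte, Fin.reduceEq, map_add, map_sub, map_mul]
  ring

theorem charpoly_map_ofReal (A : Matrix n n ℝ) :
    (A.map ((↑) : ℝ → ℂ)).charpoly = A.charpoly.map Complex.ofRealHom :=
  A.charpoly_map Complex.ofRealHom

theorem re_neg_of_isRoot_charpoly_fin_three (A : Matrix (Fin 3) (Fin 3) ℝ) (htr : A.trace < 0)
    (hdet : A.det < 0) (hH : A.trace * A.principalMinorSum₂ < A.det) {z : ℂ}
    (hz : (A.map ((↑) : ℝ → ℂ)).charpoly.IsRoot z) : z.re < 0 := by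
  rw [charpoly_map_ofReal, charpoly_fin_three] at hz
  simp only [IsRoot, eval_map, eval₂_sub, eval₂_add, eval₂_mul, eval₂_X_pow, eval₂_X, eval₂_C,
    Complex.ofRealHom_eq_coe] at hz
  exact Complex.re_neg_of_cubic_eq_zero (a := -A.trace) (b := A.principalMinorSum₂) (c := -A.det)
    (by linarith) (by linarith) (by linarith) (by push_cast; linear_combination hz)

theorem exists_pos_isRoot_charpoly_of_det_pos (hn : Odd (Fintype.card n)) (A : Matrix n n ℝ)
    (hA : 0 < A.det) :
    ∃ x : ℝ, 0 < x ∧ A.charpoly.IsRoot x := by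
  have h0 : A.charpoly.eval 0 < 0 := by
    have := A.det_eq_sign_charpoly_coeff
    rw [hn.neg_one_pow, coeff_zero_eq_eval_zero] at this
    linarith
  have htop := A.charpoly.tendsto_atTop_of_leadingCoeff_nonneg
    (by rw [A.charpoly_degree_eq_dim]; exact_mod_cast hn.pos)
    (by rw [A.charpoly_monic.leadingCoeff]; exact zero_le_one)
  obtain ⟨M, hM, hM0⟩ := ((htop.eventually_gt_atTop 0).and (Filter.eventually_gt_atTop 0)).exists
  obtain ⟨x, hx, hroot⟩ :=
    intermediate_value_Ioo hM0.le A.charpoly.continuous.continuousOn ⟨h0, hM⟩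
  exact ⟨x, hx.1, hroot⟩

theorem exists_re_pos_isRoot_charpoly_map_of_det_pos (hn : Odd (Fintype.card n)) (A : Matrix n n ℝ)
    (hA : 0 < A.det) :
    ∃ z : ℂ, (A.map ((↑) : ℝ → ℂ)).charpoly.IsRoot z ∧ 0 < z.re := by
  obtain ⟨x, hx, hroot⟩ := exists_pos_isRoot_charpoly_of_det_pos hn A hA
  refine ⟨x, ?_, hx⟩
  rw [charpoly_map_ofReal]
  exact hroot.map

end Matrix

theorem jacobianAt_hcvRHS {s rT Tmax d rI b δ ρ Rstar c T I V : ℝ} (hN : T + I ≠ 0) :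
    jacobianAt (hcvRHS s rT Tmax d rI b δ ρ Rstar c) ![T, I, V] =
      !![rT * (1 - (T + I) / Tmax) - rT * T / Tmax - d - b * V * I / (T + I) ^ 2,
          -(rT * T / Tmax) + b * T * V / (T + I) ^ 2, -(b * T / (T + I));
        -(rI * I / Tmax) + b * V * I / (T + I) ^ 2,
          rI * (1 - (T + I) / Tmax) - rI * I / Tmax - b * T * V / (T + I) ^ 2 - δ,
          b * T / (T + I);
        -(b * V * I / (T + I) ^ 2), ρ * Rstar + b * T * V / (T + I) ^ 2, -c - b * T / (T + I)] := by
  have hN' : I + T ≠ 0 := by rwa [add_comm]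
  ext i j
  fin_cases i <;> fin_cases j <;>
    simp (disch := first | assumption | fun_prop (disch := assumption))
      [jacobianAt, hcvRHS, Function.update_apply, deriv_fun_add, deriv_fun_sub, deriv_fun_mul,
        deriv_fun_div, deriv_div_const] <;>
    field_simp <;> ring

local notation "hcvExample" => hcvRHS 8 5 1 2 25 12 30 35 1 3

theorem eq_or_eq_of_hcvExample_eq_zero {T I V : ℝ} (hT : 0 < T) (hI : 0 < I)
    (h : hcvExample ![T, I, V] = 0) :
    ![T, I, V] = ![1/5, 2/5, 2] ∨ ![T, I, V] = ![1/2, 3/10, 1] := by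
  have hT' := congrFun h 0
  have hI' := congrFun h 1
  have hV' := congrFun h 2
  simp only [hcvRHS, Matrix.cons_val_zero, Matrix.cons_val_one, Matrix.cons_val_two,
    Matrix.head_cons, Matrix.tail_cons, Pi.zero_apply, div_one, mul_one] at hT' hI' hV'
  set N := T + I with hN
  set φ := 12 * T * V / N
  have hφN : φ * N = 12 * T * V := div_mul_cancel₀ _ (by positivity)
  -- `I' = 0` and `V' = 0` give `φ` and `V` in terms of `I` and `N`; then `φ N = 12 T V` and
  -- `T' = 0` are two equations in `T` and `N`, and eliminating `T` leaves a cubic in `N`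
  have hφI : φ = I * (5 + 25 * N) := by linear_combination hI'
  have hV : 3 * V = I * (30 - 25 * N) := by linear_combination -hV' - hφI
  have hT₁ : 4 * T * (30 - 25 * N) = (5 + 25 * N) * N := by
    refine mul_left_cancel₀ hI.ne' ?_
    linear_combination N * hφI - hφN - 4 * T * hV
  have hT₂ : T * (112 - 120 * N) = 8 := by linear_combination hT₁ - hT' - hφI
  have hcubic : (5 * N - 4) * (5 * N - 3) * (3 * N + 2) = 0 := by
    linear_combination ((14 - 15 * N) / 5) * hT₁ + ((25 * N - 30) / 10) * hT₂
  have hN₀ : 0 < 3 * N + 2 := by positivity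
  rcases mul_eq_zero.mp hcubic with h | h
  · rcases mul_eq_zero.mp h with h | h
    · right
      have hN' : N = 4 / 5 := by linarith
      have hT : T = 1 / 2 := by rw [hN'] at hT₂; linarith
      have hI : I = 3 / 10 := by linarith
      have hV : V = 1 := by rw [hN', hI] at hV; linarith
      rw [hT, hI, hV]
    · left
      have hN' : N = 3 / 5 := by linarith
      have hT : T = 1 / 5 := by rw [hN'] at hT₂; linarith
      have hI : I = 2 / 5 := by linarith
      have hV : V = 2 := by rw [hN', hI] at hV; linarith
      rw [hT, hI, hV]
  · linarith

theorem hcvExample_eq_zero_iff {q : Fin 3 → ℝ} (hq : ∀ i, 0 < q i) :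
    hcvExample q = 0 ↔ q = ![1/5, 2/5, 2] ∨ q = ![1/2, 3/10, 1] := by
  obtain ⟨T, I, V, rfl⟩ : ∃ T I V : ℝ, q = ![T, I, V] :=
    ⟨q 0, q 1, q 2, by ext i; fin_cases i <;> rfl⟩
  refine ⟨eq_or_eq_of_hcvExample_eq_zero (hq 0) (hq 1), ?_⟩
  rintro (h | h) <;> rw [h] <;> ext i <;> fin_cases i <;> norm_num [hcvRHS, Matrix.cons_val_two]

theorem hcvExample_re_neg_of_isRoot_charpoly_jacobianAt {z : ℂ}
    (hz : ((jacobianAt hcvExample ![1/5, 2/5, 2]).map ((↑) : ℝ → ℂ)).charpoly.IsRoot z) :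
    z.re < 0 := by
  rw [jacobianAt_hcvRHS (by norm_num)] at hz
  refine Matrix.re_neg_of_isRoot_charpoly_fin_three _ ?_ ?_ ?_ hz <;>
    norm_num [Matrix.trace_fin_three, Matrix.det_fin_three, Matrix.principalMinorSum₂,
      Matrix.cons_val_two]

theorem hcvExample_exists_re_pos_isRoot_charpoly_jacobianAt :
    ∃ z : ℂ, ((jacobianAt hcvExample ![1/2, 3/10, 1]).map ((↑) : ℝ → ℂ)).charpoly.IsRoot z ∧
      0 < z.re := by
  refine Matrix.exists_re_pos_isRoot_charpoly_map_of_det_pos (by decide) _ ?_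
  rw [jacobianAt_hcvRHS (by norm_num)]
  norm_num [Matrix.det_fin_three, Matrix.cons_val_two]

/-- There exist positive parameters for the in-host hepatitis C
model with `δ > r_I(1 − p₀/T_max)` and `R₀ < 1` for which there are exactly two
positive steady states, at one of which all eigenvalues of the Jacobian have
negative real parts while at the other the Jacobian has an eigenvalue with
positive real part. -/
theorem stmt17 :
    ∃ s rT Tmax d rI b δ ρ Rstar c : ℝ,
      0 < s ∧ 0 < rT ∧ 0 < Tmax ∧ 0 < d ∧ 0 < rI ∧ 0 < b ∧ 0 < δ ∧
      0 < ρ ∧ 0 < Rstar ∧ 0 < c ∧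
      (∃ p₀ : ℝ,
        p₀ = (rT - d + Real.sqrt ((rT - d) ^ 2 + 4 * s * rT / Tmax)) *
          Tmax / (2 * rT) ∧
        rI * (1 - p₀ / Tmax) < δ ∧
        b * ρ * Rstar / ((b + c) * (δ - rI * (1 - p₀ / Tmax))) < 1) ∧
      ∃ p₁ p₂ : Fin 3 → ℝ, p₁ ≠ p₂ ∧
        (∀ i, 0 < p₁ i) ∧ (∀ i, 0 < p₂ i) ∧
        hcvRHS s rT Tmax d rI b δ ρ Rstar c p₁ = 0 ∧
        hcvRHS s rT Tmax d rI b δ ρ Rstar c p₂ = 0 ∧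
        (∀ q : Fin 3 → ℝ, (∀ i, 0 < q i) →
          hcvRHS s rT Tmax d rI b δ ρ Rstar c q = 0 → q = p₁ ∨ q = p₂) ∧
        (∀ z : ℂ,
          ((jacobianAt (hcvRHS s rT Tmax d rI b δ ρ Rstar c) p₁).map
            (fun x : ℝ => (x : ℂ))).charpoly.IsRoot z → z.re < 0) ∧
        (∃ z : ℂ,
          ((jacobianAt (hcvRHS s rT Tmax d rI b δ ρ Rstar c) p₂).map
            (fun x : ℝ => (x : ℂ))).charpoly.IsRoot z ∧ 0 < z.re) := by
  have hsqrt : Real.sqrt ((5 - 2) ^ 2 + 4 * 8 * 5 / 1) = 13 := by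
    rw [show ((5 - 2) ^ 2 + 4 * 8 * 5 / 1 : ℝ) = 13 ^ 2 by norm_num]
    exact Real.sqrt_sq (by norm_num)
  have hp₁ : ∀ i, 0 < ![(1/5 : ℝ), 2/5, 2] i := by intro i; fin_cases i <;> norm_num
  have hp₂ : ∀ i, 0 < ![(1/2 : ℝ), 3/10, 1] i := by intro i; fin_cases i <;> norm_num
  refine ⟨8, 5, 1, 2, 25, 12, 30, 35, 1, 3, by norm_num, by norm_num, by norm_num, by norm_num,
    by norm_num, by norm_num, by norm_num, by norm_num, by norm_num, by norm_num,
    ⟨8/5, by rw [hsqrt]; norm_num, by norm_num, by norm_num⟩,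
    _, _, fun h => by simpa using congrFun h 0, hp₁, hp₂,
    (hcvExample_eq_zero_iff hp₁).2 (.inl rfl), (hcvExample_eq_zero_iff hp₂).2 (.inr rfl),
    fun q hq => (hcvExample_eq_zero_iff hq).1,
    fun _ => hcvExample_re_neg_of_isRoot_charpoly_jacobianAt,
    hcvExample_exists_re_pos_isRoot_charpoly_jacobianAt⟩
end

section
/- Consider the truncated hepatitis C model obtained by setting s = 0 and d = 0, with positive parameters r_T, T_max, b, c, ρ, R*, and set μ = ρR*, δ = bμ/(b+c), r_I = c·r_T/(b+c). For every real X with 0 < X < 1 and b(μ+r_T)X + cr_T − bμ > 0, the point (T, I, V) given by T = T_max·X·(b(μ+r_T)X + cr_T − bμ)/(r_T(bX+c)), I = T_max·(1−X)·(b(μ+r_T)X + cr_T − bμ)/(r_T(bX+c)), V = μ·T_max·(1−X)·(b(μ+r_T)X + cr_T − bμ)/(r_T(bX+c)²) satisfies T > 0, I > 0, V > 0 and is a steady state of the truncated system (all three right-hand sides vanish). Hence for these parameter values the truncated model admits a continuum of positive steady states. -/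
/-- For the truncated hepatitis C model (the in-host model with
`s = 0`, `d = 0`), with `μ = ρR*`, `δ = bμ/(b+c)` (i.e. `R₀ = 1`) and
`r_I = cr_T/(b+c)` (i.e. `a = 0`), every `X ∈ (0,1)` with
`b(μ+r_T)X + cr_T − bμ > 0` yields a positive steady state
`T = T_max·X·(b(μ+r_T)X + cr_T − bμ)/(r_T(bX+c))`,
`I = T_max·(1−X)·(b(μ+r_T)X + cr_T − bμ)/(r_T(bX+c))`,
`V = μ·T_max·(1−X)·(b(μ+r_T)X + cr_T − bμ)/(r_T(bX+c)²)`;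
hence the truncated model admits a continuum (an infinite set) of positive
steady states. -/
theorem stmt18 (rT Tmax b c ρ Rstar μ δ rI : ℝ)
    (hrT : 0 < rT) (hTmax : 0 < Tmax) (hb : 0 < b) (hc : 0 < c)
    (hρ : 0 < ρ) (hRstar : 0 < Rstar)
    (hμ : μ = ρ * Rstar)
    (hδ : δ = b * μ / (b + c))
    (hrI : rI = c * rT / (b + c)) :
    (∀ X : ℝ, 0 < X → X < 1 → 0 < b * (μ + rT) * X + c * rT - b * μ →
      ∀ T I V : ℝ,
        T = Tmax * X * (b * (μ + rT) * X + c * rT - b * μ) /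
          (rT * (b * X + c)) →
        I = Tmax * (1 - X) * (b * (μ + rT) * X + c * rT - b * μ) /
          (rT * (b * X + c)) →
        V = μ * Tmax * (1 - X) * (b * (μ + rT) * X + c * rT - b * μ) /
          (rT * (b * X + c) ^ 2) →
        0 < T ∧ 0 < I ∧ 0 < V ∧
        rT * T * (1 - (T + I) / Tmax) - b * T * V / (T + I) = 0 ∧
        rI * I * (1 - (T + I) / Tmax) + b * T * V / (T + I) - δ * I = 0 ∧
        ρ * Rstar * I - c * V - b * T * V / (T + I) = 0) ∧
    {p : ℝ × ℝ × ℝ | 0 < p.1 ∧ 0 < p.2.1 ∧ 0 < p.2.2 ∧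
      rT * p.1 * (1 - (p.1 + p.2.1) / Tmax) -
        b * p.1 * p.2.2 / (p.1 + p.2.1) = 0 ∧
      rI * p.2.1 * (1 - (p.1 + p.2.1) / Tmax) +
        b * p.1 * p.2.2 / (p.1 + p.2.1) - δ * p.2.1 = 0 ∧
      ρ * Rstar * p.2.1 - c * p.2.2 -
        b * p.1 * p.2.2 / (p.1 + p.2.1) = 0}.Infinite := by
  subst hδ hrI
  have hμ0 : 0 < μ := by rw [hμ]; positivity
  have hbc : (0:ℝ) < b + c := by linarith
  have key : ∀ X : ℝ, 0 < X → X < 1 → 0 < b * (μ + rT) * X + c * rT - b * μ →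
      ∀ T I V : ℝ,
        T = Tmax * X * (b * (μ + rT) * X + c * rT - b * μ) /
          (rT * (b * X + c)) →
        I = Tmax * (1 - X) * (b * (μ + rT) * X + c * rT - b * μ) /
          (rT * (b * X + c)) →
        V = μ * Tmax * (1 - X) * (b * (μ + rT) * X + c * rT - b * μ) /
          (rT * (b * X + c) ^ 2) →
        0 < T ∧ 0 < I ∧ 0 < V ∧
        rT * T * (1 - (T + I) / Tmax) - b * T * V / (T + I) = 0 ∧
        c * rT / (b + c) * I * (1 - (T + I) / Tmax) + b * T * V / (T + I) - b * μ / (b + c) * I = 0 ∧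
        ρ * Rstar * I - c * V - b * T * V / (T + I) = 0 := by
    intro X hX0 hX1 hf T I V hT hI hV
    have hbXc : 0 < b * X + c := by positivity
    have hD : 0 < rT * (b * X + c) := by positivity
    have hD2 : 0 < rT * (b * X + c) ^ 2 := by positivity
    have h1X : 0 < 1 - X := by linarith
    have hT0 : 0 < T := by
      rw [hT]; exact div_pos (mul_pos (mul_pos hTmax hX0) hf) hD
    have hI0 : 0 < I := by
      rw [hI]; exact div_pos (mul_pos (mul_pos hTmax h1X) hf) hD
    have hV0 : 0 < V := by
      rw [hV]
      exact div_pos (mul_pos (mul_pos (mul_pos hμ0 hTmax) h1X) hf) hD2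
    have hTI : 0 < T + I := by linarith
    subst hT hI hV
    rw [hμ] at hT0 hI0 hV0 hTI hf ⊢
    refine ⟨hT0, hI0, hV0, ?_, ?_, ?_⟩ <;>
    · field_simp [hTmax.ne', hD.ne', hD2.ne', hTI.ne', hbc.ne', hrT.ne', hbXc.ne']
      ring
  refine ⟨key, ?_⟩
  have hA : 0 < b * (μ + rT) := mul_pos hb (by linarith)
  set ε : ℝ := min (1/2) (rT * (b + c) / (2 * (b * (μ + rT)))) with hεdef
  have hε0 : 0 < ε := lt_min (by norm_num) (div_pos (mul_pos hrT hbc) (by positivity))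
  have hε2 : ε ≤ 1/2 := min_le_left _ _
  have hε3 : ε ≤ rT * (b + c) / (2 * (b * (μ + rT))) := min_le_right _ _
  have hε4 : ε * (2 * (b * (μ + rT))) ≤ rT * (b + c) :=
    (le_div_iff₀ (by positivity)).mp hε3
  have hsub : 1 - ε < 1 := by linarith
  set g : ℝ → ℝ × ℝ × ℝ := fun X =>
    (Tmax * X * (b * (μ + rT) * X + c * rT - b * μ) / (rT * (b * X + c)),
     Tmax * (1 - X) * (b * (μ + rT) * X + c * rT - b * μ) / (rT * (b * X + c)),
     μ * Tmax * (1 - X) * (b * (μ + rT) * X + c * rT - b * μ) /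
       (rT * (b * X + c) ^ 2)) with hg
  have hprops : ∀ X ∈ Set.Ioo (1 - ε) 1, 0 < X ∧ X < 1 ∧
      0 < b * (μ + rT) * X + c * rT - b * μ := by
    rintro X ⟨hX1, hX2⟩
    refine ⟨by linarith, hX2, ?_⟩
    nlinarith [mul_le_mul_of_nonneg_left (le_of_lt hX1) hA.le]
  have hmem : ∀ X ∈ Set.Ioo (1 - ε) 1, g X ∈
      {p : ℝ × ℝ × ℝ | 0 < p.1 ∧ 0 < p.2.1 ∧ 0 < p.2.2 ∧
        rT * p.1 * (1 - (p.1 + p.2.1) / Tmax) -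
          b * p.1 * p.2.2 / (p.1 + p.2.1) = 0 ∧
        c * rT / (b + c) * p.2.1 * (1 - (p.1 + p.2.1) / Tmax) +
          b * p.1 * p.2.2 / (p.1 + p.2.1) - b * μ / (b + c) * p.2.1 = 0 ∧
        ρ * Rstar * p.2.1 - c * p.2.2 -
          b * p.1 * p.2.2 / (p.1 + p.2.1) = 0} := by
    intro X hX
    obtain ⟨h1, h2, h3⟩ := hprops X hX
    exact key X h1 h2 h3 _ _ _ rfl rfl rfl
  have hXval : ∀ X ∈ Set.Ioo (1 - ε) 1, X = (g X).1 / ((g X).1 + (g X).2.1) := by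
    intro X hX
    obtain ⟨h1, h2, h3⟩ := hprops X hX
    obtain ⟨hT0, hI0, -, -⟩ := key X h1 h2 h3 _ _ _ rfl rfl rfl
    have hsum : (g X).1 + (g X).2.1 ≠ 0 := by
      have : (0:ℝ) < (g X).1 + (g X).2.1 := add_pos hT0 hI0
      exact this.ne'
    simp only [hg] at hsum ⊢
    have hD : (rT * (b * X + c)) ≠ 0 := by positivity
    rw [eq_div_iff (by simpa using hsum)]
    field_simp
    ring
  have hinj : Set.InjOn g (Set.Ioo (1 - ε) 1) := by
    intro X hX Y hY hXY
    rw [hXval X hX, hXval Y hY, hXY]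
  exact Set.Infinite.mono (Set.image_subset_iff.mpr hmem)
    (Set.Infinite.image hinj (Set.Ioo_infinite hsub))
end
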